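/- arXiv:2403.03235 — 9 statements merged into one kernel-verified Lean document; each statement's English description precedes it below -/
import Mathlib

section
/- Let U ⊆ ℝⁿ be open, T > 0, x₀ ∈ U, and let F be a set of functions f : ℝ × U → ℝⁿ, each continuous on [0,T] × U, with a common Lipschitz constant K ≥ 1 in the second argument uniformly for t ∈ [0,T], and a common bound M with ‖f(t,u)‖ ≤ M for all f ∈ F, u ∈ U, t ∈ [0,T]. Let a, b : [0,T] → F be step functions (right-continuous with left limits, finitely many discontinuities), and let x_a, x_b : [0,T] → U be the corresponding matching output signals with x_a(0) = x_b(0) = x₀ (continuous, and differentiable with x_a'(t) = a(t)(t, x_a(t)) at every t where a is continuous, and similarly for b). Then sup_{t∈[0,T]} ‖x_a(t) − x_b(t)‖ ≤ 2 M e^{TK} · λ({t ∈ [0,T] : a(t) ≠ b(t)}), where λ is the Lebesgue measure. In particular, the mapping a ↦ x_a is continuous from the metric d_T(a,b) = λ({t : a(t) ≠ b(t)}) to the supremum norm. -/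
/-!
Off the finitely many switching times, `y = xa - xb` is differentiable with
`‖y'‖ ≤ K ‖y‖ + 2 M 𝟙_D`, where `D` is the set on which `a ≠ b`: where the modes agree, the
common field is `K`-Lipschitz, and on `D` both fields are bounded by `M`. Integrating this from
`y 0 = 0` gives `‖y u‖ ≤ 2 M λ(D) + K ∫₀ᵘ ‖y‖`, and Grönwall's inequality in integral form turns
this into `‖y t‖ ≤ 2 M λ(D) e^{K t}`.
-/

open Set Real MeasureTheory Filter Topology

theorem hasDerivAt_of_mem_Ioo_diff {α V : Type*} [NormedAddCommGroup V] [NormedSpace ℝ V]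
    {m : ℝ → α} {x v : ℝ → V} {S : Set ℝ} {c T : ℝ}
    (hstep : ∀ t ∈ Icc c T, t ∉ S → ∃ ε > 0, ∀ s ∈ Icc c T, |s - t| < ε → m s = m t)
    (hd : ∀ t ∈ Ioo c T, (∃ ε > 0, ∀ s, |s - t| < ε → m s = m t) → HasDerivAt x (v t) t) :
    ∀ t ∈ Ioo c T \ S, HasDerivAt x (v t) t := by
  rintro t ⟨ht, htS⟩
  obtain ⟨ε, hε, hm⟩ := hstep t (Ioo_subset_Icc_self ht) htS
  have hev : ∀ᶠ s in 𝓝 t, m s = m t := by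
    filter_upwards [Metric.ball_mem_nhds t hε, Icc_mem_nhds ht.1 ht.2] with s hs hsI
    exact hm s hsI hs
  exact hd t ht (by simpa only [Real.dist_eq] using Metric.eventually_nhds_iff.1 hev)

theorem le_mul_exp_of_le_add_mul_integral {g : ℝ → ℝ} {a b C K : ℝ}
    (hg : ContinuousOn g (Icc a b)) (hK : 0 ≤ K)
    (h : ∀ u ∈ Icc a b, g u ≤ C + K * ∫ s in a..u, g s) :
    ∀ u ∈ Icc a b, g u ≤ C * exp (K * (u - a)) := by
  set G : ℝ → ℝ := fun u => C + K * ∫ s in a..u, g s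
  have hG : ∀ x ∈ Icc a b, HasDerivWithinAt G (K * g x) (Icc a b) x := by
    intro x hx
    have : Fact (x ∈ Icc a b) := ⟨hx⟩
    refine (intervalIntegral.integral_hasDerivWithinAt_right ?_
      (hg.stronglyMeasurableAtFilter_nhdsWithin measurableSet_Icc x) (hg x hx)).const_mul K
      |>.const_add C
    exact (hg.mono (uIcc_subset_Icc (left_mem_Icc.2 (hx.1.trans hx.2)) hx)).intervalIntegrable
  have hGle := le_gronwallBound_of_liminf_deriv_right_le (δ := C) (K := K) (ε := 0)
    (fun x hx => (hG x hx).continuousWithinAt)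
    (fun x hx r hr => ((hG x (Ico_subset_Icc_self hx)).mono_of_mem_nhdsWithin
      (Icc_mem_nhdsGE_of_mem hx)).liminf_right_slope_le hr)
    (by simp [G]) (fun x hx => by
      simpa using mul_le_mul_of_nonneg_left (h x (Ico_subset_Icc_self hx)) hK)
  intro u hu
  simpa [gronwallBound_ε0] using (h u hu).trans (hGle u hu)

section

variable {E : Type*} [NormedAddCommGroup E] [NormedSpace ℝ E] [CompleteSpace E]

theorem norm_sub_le_integral_of_norm_deriv_le_off_countable {y : ℝ → E} {φ : ℝ → ℝ}
    {a b : ℝ} {S : Set ℝ} (hab : a ≤ b) (hS : S.Countable) (hy : ContinuousOn y (Icc a b))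
    (hyd : ∀ x ∈ Ioo a b \ S, DifferentiableAt ℝ y x) (hφ : IntervalIntegrable φ volume a b)
    (hbound : ∀ x ∈ Ioo a b \ S, ‖deriv y x‖ ≤ φ x) :
    ‖y b - y a‖ ≤ ∫ x in a..b, φ x := by
  have hae : ∀ᵐ x, x ∈ Ioc a b → ‖deriv y x‖ ≤ φ x := by
    filter_upwards [measure_eq_zero_iff_ae_notMem.1
      ((hS.union (countable_singleton b)).measure_zero volume)] with x hx hxI
    simp only [mem_union, mem_singleton_iff, not_or] at hx
    exact hbound x ⟨⟨hxI.1, hxI.2.lt_of_ne hx.2⟩, hx.1⟩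
  have hint : IntervalIntegrable (deriv y) volume a b := by
    rw [intervalIntegrable_iff_integrableOn_Ioc_of_le hab] at hφ ⊢
    exact hφ.mono' (stronglyMeasurable_deriv y).aestronglyMeasurable
      ((ae_restrict_iff' measurableSet_Ioc).2 hae)
  rw [← integral_eq_of_hasDerivAt_off_countable_of_le y (deriv y) hab hS hy
    (fun x hx => (hyd x hx).hasDerivAt) hint]
  exact intervalIntegral.norm_integral_le_of_norm_le hab hae hφ

theorem norm_le_of_norm_deriv_le_mul_add_off_countable {y : ℝ → E} {ψ : ℝ → ℝ}
    {a b K : ℝ} {S : Set ℝ} (hK : 0 ≤ K) (hS : S.Countable) (hy : ContinuousOn y (Icc a b))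
    (hyd : ∀ x ∈ Ioo a b \ S, DifferentiableAt ℝ y x) (hψ : IntervalIntegrable ψ volume a b)
    (hψ0 : 0 ≤ ψ) (hbound : ∀ x ∈ Ioo a b \ S, ‖deriv y x‖ ≤ K * ‖y x‖ + ψ x) :
    ∀ t ∈ Icc a b, ‖y t‖ ≤ (‖y a‖ + ∫ x in a..b, ψ x) * exp (K * (t - a)) := by
  have hny : ContinuousOn (fun x => ‖y x‖) (Icc a b) := hy.norm
  refine le_mul_exp_of_le_add_mul_integral hny hK fun u hu => ?_
  have hsub : uIcc a u ⊆ Icc a b := uIcc_subset_Icc (left_mem_Icc.2 (hu.1.trans hu.2)) hu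
  have hnyi : IntervalIntegrable (fun x => ‖y x‖) volume a u :=
    (hny.mono hsub).intervalIntegrable
  have hψi : IntervalIntegrable ψ volume a u := hψ.mono_set (uIcc_of_le (hu.1.trans hu.2) ▸ hsub)
  have hFTC : ‖y u - y a‖ ≤ ∫ x in a..u, K * ‖y x‖ + ψ x :=
    norm_sub_le_integral_of_norm_deriv_le_off_countable hu.1 hS
      (hy.mono (Icc_subset_Icc_right hu.2))
      (fun x hx => hyd x ⟨⟨hx.1.1, hx.1.2.trans_le hu.2⟩, hx.2⟩) ((hnyi.const_mul K).add hψi)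
      (fun x hx => hbound x ⟨⟨hx.1.1, hx.1.2.trans_le hu.2⟩, hx.2⟩)
  have hψle : ∫ x in a..u, ψ x ≤ ∫ x in a..b, ψ x :=
    intervalIntegral.integral_mono_interval le_rfl hu.1 hu.2 (Eventually.of_forall hψ0) hψ
  rw [intervalIntegral.integral_add (hnyi.const_mul K) hψi, intervalIntegral.integral_const_mul]
    at hFTC
  linarith [norm_le_insert' (y u) (y a)]

end

theorem norm_sub_apply_le_mul_add_indicator {α V W : Type*} [NormedAddCommGroup V]
    [NormedAddCommGroup W] {f g : V → W} {u v : V} {K M : ℝ} {D : Set α} {s : α} (hK : 0 ≤ K)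
    (hlip : ‖g u - g v‖ ≤ K * ‖u - v‖) (hfu : ‖f u‖ ≤ M) (hgv : ‖g v‖ ≤ M) (hD : f ≠ g → s ∈ D) :
    ‖f u - g v‖ ≤ K * ‖u - v‖ + D.indicator (fun _ => 2 * M) s := by
  have hM : 0 ≤ M := (norm_nonneg _).trans hfu
  by_cases hfg : f = g
  · subst hfg
    exact hlip.trans (le_add_of_nonneg_right (indicator_nonneg (fun _ _ => by positivity) s))
  · rw [indicator_of_mem (hD hfg)]
    linarith [norm_sub_le (f u) (g v), mul_nonneg hK (norm_nonneg (u - v))]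

theorem intervalIntegral_indicator_const_le {s : Set ℝ} {a b c : ℝ} (hab : a ≤ b) (hc : 0 ≤ c)
    (hs : MeasurableSet s) (hfin : volume s ≠ ⊤) :
    ∫ x in a..b, s.indicator (fun _ => c) x ≤ c * volume.real s := by
  rw [intervalIntegral.integral_of_le hab, integral_indicator_const c hs, smul_eq_mul, mul_comm,
    measureReal_restrict_apply hs]
  exact mul_le_mul_of_nonneg_left (measureReal_mono inter_subset_left hfin) hc

theorem stmt2_general (n : ℕ) (U : Set (EuclideanSpace ℝ (Fin n)))
    (T : ℝ) (x₀ : EuclideanSpace ℝ (Fin n))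
    (F : Set (ℝ → EuclideanSpace ℝ (Fin n) → EuclideanSpace ℝ (Fin n)))
    (K M : ℝ) (hK : 1 ≤ K)
    (hlip : ∀ f ∈ F, ∀ t ∈ Icc (0:ℝ) T, ∀ u ∈ U, ∀ v ∈ U, ‖f t u - f t v‖ ≤ K * ‖u - v‖)
    (hbound : ∀ f ∈ F, ∀ t ∈ Icc (0:ℝ) T, ∀ u ∈ U, ‖f t u‖ ≤ M)
    (a b : ℝ → ℝ → EuclideanSpace ℝ (Fin n) → EuclideanSpace ℝ (Fin n))
    (haF : ∀ t ∈ Icc (0:ℝ) T, a t ∈ F) (hbF : ∀ t ∈ Icc (0:ℝ) T, b t ∈ F)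
    (Sa Sb : Finset ℝ)
    (haStep : ∀ t ∈ Icc (0:ℝ) T, t ∉ Sa →
      ∃ ε > 0, ∀ s ∈ Icc (0:ℝ) T, |s - t| < ε → a s = a t)
    (hbStep : ∀ t ∈ Icc (0:ℝ) T, t ∉ Sb →
      ∃ ε > 0, ∀ s ∈ Icc (0:ℝ) T, |s - t| < ε → b s = b t)
    (xa xb : ℝ → EuclideanSpace ℝ (Fin n))
    (hxa0 : xa 0 = x₀) (hxb0 : xb 0 = x₀)
    (hxac : ContinuousOn xa (Icc 0 T)) (hxbc : ContinuousOn xb (Icc 0 T))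
    (hxaU : ∀ t ∈ Icc (0:ℝ) T, xa t ∈ U) (hxbU : ∀ t ∈ Icc (0:ℝ) T, xb t ∈ U)
    (hxad : ∀ t ∈ Ioo (0:ℝ) T, (∃ ε > 0, ∀ s, |s - t| < ε → a s = a t) →
      HasDerivAt xa (a t t (xa t)) t)
    (hxbd : ∀ t ∈ Ioo (0:ℝ) T, (∃ ε > 0, ∀ s, |s - t| < ε → b s = b t) →
      HasDerivAt xb (b t t (xb t)) t) :
    ∀ t ∈ Icc (0:ℝ) T, ‖xa t - xb t‖ ≤
      2 * M * Real.exp (T * K) * (volume {t ∈ Icc (0:ℝ) T | a t ≠ b t}).toReal := by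
  intro t ht
  have h0 : (0:ℝ) ∈ Icc 0 T := left_mem_Icc.2 (ht.1.trans ht.2)
  have hK0 : 0 ≤ K := zero_le_one.trans hK
  have hM : 0 ≤ M := (norm_nonneg _).trans (hbound _ (haF 0 h0) 0 h0 _ (hxaU 0 h0))
  set D := {t ∈ Icc (0:ℝ) T | a t ≠ b t}
  -- `D` need not be measurable; its measurable hull has the same measure.
  set E := toMeasurable volume D
  have hderiv : ∀ s ∈ Ioo 0 T \ ↑(Sa ∪ Sb),
      HasDerivAt (xa - xb) (a s s (xa s) - b s s (xb s)) s := fun s hs =>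
    (hasDerivAt_of_mem_Ioo_diff haStep hxad s ⟨hs.1, fun h => hs.2 (Finset.mem_union_left _ h)⟩).sub
      (hasDerivAt_of_mem_Ioo_diff hbStep hxbd s ⟨hs.1, fun h => hs.2 (Finset.mem_union_right _ h)⟩)
  have hψ : IntervalIntegrable (E.indicator fun _ => 2 * M) volume 0 T := by
    rw [intervalIntegrable_iff_integrableOn_Ioc_of_le h0.2]
    exact (integrableOn_const measure_Ioc_lt_top.ne).indicator (measurableSet_toMeasurable _ _)
  have hgron := norm_le_of_norm_deriv_le_mul_add_off_countable hK0 (Sa ∪ Sb).countable_toSet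
    (hxac.sub hxbc) (fun s hs => (hderiv s hs).differentiableAt) hψ
    (fun s => indicator_nonneg (fun _ _ => by positivity) s) (fun s hs => by
      have hs' := Ioo_subset_Icc_self hs.1
      rw [(hderiv s hs).deriv]
      exact norm_sub_apply_le_mul_add_indicator hK0 (hlip _ (hbF s hs') s hs' _ (hxaU s hs') _
        (hxbU s hs')) (hbound _ (haF s hs') s hs' _ (hxaU s hs'))
        (hbound _ (hbF s hs') s hs' _ (hxbU s hs'))
        fun hab => subset_toMeasurable _ _ ⟨hs', fun h => hab (congrFun h s)⟩)
    t ht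
  have hint := intervalIntegral_indicator_const_le (c := 2 * M) h0.2 (by positivity)
    (measurableSet_toMeasurable volume D) (by rw [measure_toMeasurable]; exact
      ((measure_mono (sep_subset _ _)).trans_lt measure_Icc_lt_top).ne)
  rw [measureReal_def, measure_toMeasurable] at hint
  simp only [Pi.sub_apply, hxa0, hxb0, sub_self, norm_zero, zero_add, sub_zero] at hgron
  calc ‖xa t - xb t‖ ≤ (∫ x in (0:ℝ)..T, E.indicator (fun _ => 2 * M) x) * exp (K * t) := hgron
    _ ≤ 2 * M * (volume D).toReal * exp (T * K) :=
      mul_le_mul hint (exp_le_exp.2 (by nlinarith [ht.1, ht.2])) (exp_pos _).le (by positivity)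
    _ = 2 * M * exp (T * K) * (volume D).toReal := by ring

/-- Theorem 2.3: if `xa` and `xb` are the matching output signals for two mode-switch
step signals `a` and `b` taking values in a family `F` of vector fields with common
Lipschitz constant `K ≥ 1` and common bound `M`, then
`‖xa t - xb t‖ ≤ 2 M exp (T K) · λ({t ∈ [0,T] : a t ≠ b t})` for all `t ∈ [0,T]`;
in particular the map `a ↦ x_a` is continuous. -/
theorem stmt2 (n : ℕ) (U : Set (EuclideanSpace ℝ (Fin n))) (hU : IsOpen U)
    (T : ℝ) (hT : 0 < T) (x₀ : EuclideanSpace ℝ (Fin n)) (hx₀ : x₀ ∈ U)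
    (F : Set (ℝ → EuclideanSpace ℝ (Fin n) → EuclideanSpace ℝ (Fin n)))
    (K M : ℝ) (hK : 1 ≤ K)
    (hlip : ∀ f ∈ F, ∀ t ∈ Icc (0:ℝ) T, ∀ u ∈ U, ∀ v ∈ U, ‖f t u - f t v‖ ≤ K * ‖u - v‖)
    (hbound : ∀ f ∈ F, ∀ t ∈ Icc (0:ℝ) T, ∀ u ∈ U, ‖f t u‖ ≤ M)
    (a b : ℝ → ℝ → EuclideanSpace ℝ (Fin n) → EuclideanSpace ℝ (Fin n))
    (haF : ∀ t ∈ Icc (0:ℝ) T, a t ∈ F) (hbF : ∀ t ∈ Icc (0:ℝ) T, b t ∈ F)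
    (Sa Sb : Finset ℝ)
    (haStep : ∀ t ∈ Icc (0:ℝ) T, t ∉ Sa →
      ∃ ε > 0, ∀ s ∈ Icc (0:ℝ) T, |s - t| < ε → a s = a t)
    (hbStep : ∀ t ∈ Icc (0:ℝ) T, t ∉ Sb →
      ∃ ε > 0, ∀ s ∈ Icc (0:ℝ) T, |s - t| < ε → b s = b t)
    (xa xb : ℝ → EuclideanSpace ℝ (Fin n))
    (hxa0 : xa 0 = x₀) (hxb0 : xb 0 = x₀)
    (hxac : ContinuousOn xa (Icc 0 T)) (hxbc : ContinuousOn xb (Icc 0 T))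
    (hxaU : ∀ t ∈ Icc (0:ℝ) T, xa t ∈ U) (hxbU : ∀ t ∈ Icc (0:ℝ) T, xb t ∈ U)
    (hxad : ∀ t ∈ Ioo (0:ℝ) T, (∃ ε > 0, ∀ s, |s - t| < ε → a s = a t) →
      HasDerivAt xa (a t t (xa t)) t)
    (hxbd : ∀ t ∈ Ioo (0:ℝ) T, (∃ ε > 0, ∀ s, |s - t| < ε → b s = b t) →
      HasDerivAt xb (b t t (xb t)) t) :
    ∀ t ∈ Icc (0:ℝ) T, ‖xa t - xb t‖ ≤
      2 * M * Real.exp (T * K) * (volume {t ∈ Icc (0:ℝ) T | a t ≠ b t}).toReal :=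
  stmt2_general n U T x₀ F K M hK hlip hbound a b haF hbF Sa Sb haStep hbStep xa xb hxa0 hxb0 hxac
    hxbc hxaU hxbU hxad hxbd
end

section
/- Let ξ ∈ ℝ and let x : [a,b] → ℝ be a continuous strictly monotonic function with x(b) = ξ. Then for every ε > 0 there exists δ > 0 such that, for every continuous function y : [a,b] → ℝ, if sup_{t∈[a,b]} |x(t) − y(t)| < δ then ∫_a^b |Θ_ξ(x)(t) − Θ_ξ(y)(t)| dt < ε. -/
open Set

/-- The thresholded version `Θ_ξ(x)` of a real-valued function `x`:
`0` where `x t ≤ ξ` and `1` where `x t > ξ`. -/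
noncomputable def Theta (ξ : ℝ) (x : ℝ → ℝ) : ℝ → ℝ := fun t => if x t ≤ ξ then 0 else 1

lemma theta_aemeasurable (ξ : ℝ) (x : ℝ → ℝ) {μ : MeasureTheory.Measure ℝ}
    (hx : AEMeasurable x μ) : AEMeasurable (Theta ξ x) μ := by
  obtain ⟨g, hg, hxg⟩ := hx
  refine ⟨Theta ξ g, Measurable.ite (measurableSet_le hg measurable_const)
    measurable_const measurable_const, hxg.mono fun t ht => ?_⟩
  simp [Theta, ht]

lemma theta_abs_le_one (ξ : ℝ) (x y : ℝ → ℝ) (t : ℝ) :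
    |Theta ξ x t - Theta ξ y t| ≤ 1 := by
  simp only [Theta]
  split_ifs <;> norm_num

lemma aux_integral (ξ a b c : ℝ) (hac : a ≤ c) (hcb : c ≤ b) (x y : ℝ → ℝ)
    (hxc : ContinuousOn x (Icc a b)) (hyc : ContinuousOn y (Icc a b))
    (h0 : ∀ t ∈ Icc a c, Theta ξ x t = Theta ξ y t) :
    ∫ t in a..b, |Theta ξ x t - Theta ξ y t| ≤ b - c := by
  set f : ℝ → ℝ := fun t => |Theta ξ x t - Theta ξ y t| with hf
  have hab : a ≤ b := hac.trans hcb
  have hxm : AEMeasurable x (MeasureTheory.volume.restrict (Icc a b)) :=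
    hxc.aemeasurable measurableSet_Icc
  have hym : AEMeasurable y (MeasureTheory.volume.restrict (Icc a b)) :=
    hyc.aemeasurable measurableSet_Icc
  have hfm : AEMeasurable f (MeasureTheory.volume.restrict (Icc a b)) :=
    by
    obtain ⟨g1, hg1, he1⟩ := theta_aemeasurable ξ x hxm
    obtain ⟨g2, hg2, he2⟩ := theta_aemeasurable ξ y hym
    exact ⟨fun t => |g1 t - g2 t|, (hg1.sub hg2).abs,
      he1.mp (he2.mono fun t h2 h1 => by simp [hf, h1, h2])⟩
  have hfint : MeasureTheory.IntegrableOn f (Icc a b) := by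
    refine MeasureTheory.Integrable.mono' (MeasureTheory.integrable_const 1)
      hfm.aestronglyMeasurable ?_
    filter_upwards with t
    simp only [hf, Real.norm_eq_abs, abs_abs]
    exact theta_abs_le_one ξ x y t
  have hII : IntervalIntegrable f MeasureTheory.volume a b := by
    rw [intervalIntegrable_iff_integrableOn_Icc_of_le hab]
    exact hfint
  have h1 : IntervalIntegrable f MeasureTheory.volume a c :=
    hII.mono_set (by rw [uIcc_of_le hac, uIcc_of_le hab]; exact Icc_subset_Icc le_rfl hcb)
  have h2 : IntervalIntegrable f MeasureTheory.volume c b :=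
    hII.mono_set (by rw [uIcc_of_le hcb, uIcc_of_le hab]; exact Icc_subset_Icc hac le_rfl)
  have hsplit : ∫ t in a..b, f t = (∫ t in a..c, f t) + ∫ t in c..b, f t :=
    (intervalIntegral.integral_add_adjacent_intervals h1 h2).symm
  have hzero : ∫ t in a..c, f t = 0 := by
    have : EqOn f 0 (uIcc a c) := by
      intro t ht
      rw [uIcc_of_le hac] at ht
      simp [hf, h0 t ht]
    rw [intervalIntegral.integral_congr this]
    simp
  have hbound : ∫ t in c..b, f t ≤ b - c := by
    calc ∫ t in c..b, f t ≤ ∫ _t in c..b, (1:ℝ) := by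
          refine intervalIntegral.integral_mono_on hcb h2 intervalIntegrable_const ?_
          intro t _
          exact theta_abs_le_one ξ x y t
      _ = b - c := by simp
  rw [hsplit, hzero, zero_add]
  exact hbound

/-- Lemma 2.4: for `x` continuous and strictly monotonic on `[a,b]` with `x b = ξ`,
for every `ε > 0` there is `δ > 0` such that any continuous `y` uniformly `δ`-close to `x`
satisfies `‖Θ_ξ(x) - Θ_ξ(y)‖₁ < ε`. -/
theorem stmt3 (ξ a b : ℝ) (hab : a ≤ b) (x : ℝ → ℝ)
    (hxc : ContinuousOn x (Icc a b))
    (hmono : StrictMonoOn x (Icc a b) ∨ StrictAntiOn x (Icc a b))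
    (hxb : x b = ξ) :
    ∀ ε > 0, ∃ δ > 0, ∀ y : ℝ → ℝ, ContinuousOn y (Icc a b) →
      (∀ t ∈ Icc a b, |x t - y t| < δ) →
      ∫ t in a..b, |Theta ξ x t - Theta ξ y t| < ε := by
  intro ε hε
  rcases eq_or_lt_of_le hab with rfl | hab'
  · exact ⟨1, one_pos, fun y _ _ => by simp [intervalIntegral.integral_same]; exact hε⟩
  set c : ℝ := max a (b - ε / 2) with hc
  have hac : a ≤ c := le_max_left _ _
  have hcb : c < b := max_lt hab' (by linarith)
  have hbc : b - c ≤ ε / 2 := by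
    have : b - ε / 2 ≤ c := le_max_right _ _
    linarith
  have hcmem : c ∈ Icc a b := ⟨hac, hcb.le⟩
  have hbmem : b ∈ Icc a b := ⟨hab, le_rfl⟩
  rcases hmono with hm | hm
  · -- strictly increasing: x c < ξ
    have hxcξ : x c < ξ := hxb ▸ hm hcmem hbmem hcb
    refine ⟨ξ - x c, by linarith, fun y hyc hclose => ?_⟩
    have h0 : ∀ t ∈ Icc a c, Theta ξ x t = Theta ξ y t := by
      intro t ht
      have htab : t ∈ Icc a b := ⟨ht.1, ht.2.trans hcb.le⟩
      have hxt : x t ≤ x c := hm.monotoneOn htab hcmem ht.2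
      have hyt : y t ≤ ξ := by
        have := abs_lt.mp (hclose t htab)
        linarith [this.1]
      simp [Theta, hyt, le_trans hxt hxcξ.le]
    have := aux_integral ξ a b c hac hcb.le x y hxc hyc h0
    linarith
  · -- strictly decreasing: x c > ξ
    have hxcξ : ξ < x c := hxb ▸ hm hcmem hbmem hcb
    refine ⟨x c - ξ, by linarith, fun y hyc hclose => ?_⟩
    have h0 : ∀ t ∈ Icc a c, Theta ξ x t = Theta ξ y t := by
      intro t ht
      have htab : t ∈ Icc a b := ⟨ht.1, ht.2.trans hcb.le⟩
      have hxt : x c ≤ x t := hm.antitoneOn htab hcmem ht.2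
      have hyt : ξ < y t := by
        have := abs_lt.mp (hclose t htab)
        linarith [this.2]
      have hxtξ : ξ < x t := lt_of_lt_of_le hxcξ hxt
      simp [Theta, not_le.mpr hyt, not_le.mpr hxtξ]
    have := aux_integral ξ a b c hac hcb.le x y hxc hyc h0
    linarith
end

section
/- Let ξ ∈ ℝ, T > 0, and let x : [0,T] → ℝ be differentiable with at most M < ∞ alternating critical points, i.e., times t₀ < t₁ < ⋯ < t_M in [0,T] with x'(t_j) = 0 for all j and such that every critical point of x is among them, where consecutive ones satisfy sgn(x(t_i) − ξ) = −sgn(x(t_{i+1}) − ξ). Then for every ε > 0 there exists δ > 0 such that every differentiable y : [0,T] → ℝ with sup_{t∈[0,T]} |x(t) − y(t)| < δ satisfies ∫_0^T |Θ_ξ(x)(t) − Θ_ξ(y)(t)| dt < ε. -/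
/-!
`Θ_ξ(x)` and `Θ_ξ(y)` can differ only where `|x - ξ| < sup |x - y|`, so it suffices that the
sets `{t ∈ [0,T] | |x t - ξ| < δ}` have measure tending to `0` with `δ`, i.e. that the level set
`{x = ξ}` is null. It is even countable: the derivative vanishes at every accumulation point
of the level set, so this closed set has only finitely many accumulation points, whereas an
uncountable closed set contains a nonempty perfect subset (Cantor–Bendixson).
-/

open Set

open MeasureTheory Filter Topology

theorem HasDerivWithinAt.eq_zero_of_accPt_inter_preimage {𝕜 F : Type*}
    [NontriviallyNormedField 𝕜] [NormedAddCommGroup F] [NormedSpace 𝕜 F] {f : 𝕜 → F} {f' : F}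
    {s : Set 𝕜} {t : 𝕜} {c : F}
    (hf : HasDerivWithinAt f f' s t) (ht : f t = c) (hacc : AccPt t (𝓟 (s ∩ f ⁻¹' {c}))) :
    f' = 0 :=
  -- `f` is constant on the level set, and at an accumulation point of a set
  -- derivatives within that set are unique.
  (AccPt.uniqueDiffWithinAt hacc).eq_deriv _ (hf.mono inter_subset_left)
    ((hasDerivWithinAt_const t _ c).congr (fun _ hu => hu.2) ht)

theorem IsClosed.countable_of_finite_accPt {α : Type*} [TopologicalSpace α] [T1Space α]
    [SecondCountableTopology α] {C : Set α} (hC : IsClosed C)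
    (h : {t ∈ C | AccPt t (𝓟 C)}.Finite) : C.Countable := by
  by_contra hunc
  obtain ⟨D, hD, ⟨t, htD⟩, hDC⟩ :=
    exists_perfect_nonempty_of_isClosed_of_not_countable hC hunc
  refine (Set.Infinite.of_accPt (hD.acc t htD)).not_finite
    (h.subset fun u hu => ⟨hDC hu, ?_⟩)
  exact (hD.acc u hu).mono (principal_mono.mpr hDC)

theorem countable_inter_preimage_singleton_of_finite_critical {F : Type*} [NormedAddCommGroup F]
    [NormedSpace ℝ F] {f : ℝ → F} {s : Set ℝ} (hs : IsClosed s) (hf : DifferentiableOn ℝ f s)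
    (hcrit : {t ∈ s | derivWithin f s t = 0}.Finite) (c : F) : (s ∩ f ⁻¹' {c}).Countable := by
  have hclosed := hf.continuousOn.preimage_isClosed_of_isClosed hs (isClosed_singleton (x := c))
  refine hclosed.countable_of_finite_accPt (hcrit.subset fun t ht => ⟨ht.1.1, ?_⟩)
  exact (hf t ht.1.1).hasDerivWithinAt.eq_zero_of_accPt_inter_preimage ht.1.2 ht.2

theorem tendsto_measure_preimage_ball_nhdsGT_zero {α E : Type*} [MeasurableSpace α]
    [MetricSpace E] [MeasurableSpace E] [OpensMeasurableSpace E] {μ : Measure α}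
    [IsFiniteMeasure μ] {f : α → E} (hf : AEMeasurable f μ) {c : E} (hc : μ (f ⁻¹' {c}) = 0) :
    Tendsto (fun r => μ (f ⁻¹' Metric.ball c r)) (𝓝[>] 0) (𝓝 0) := by
  have h := tendsto_measure_biInter_gt (μ := μ) (s := fun r => f ⁻¹' Metric.ball c r)
    (a := 0)
    (fun r _ => hf.nullMeasurableSet_preimage Metric.isOpen_ball.measurableSet)
    (fun i j _ hij => preimage_mono (Metric.ball_subset_ball hij))
    ⟨1, one_pos, measure_ne_top μ _⟩
  rwa [← preimage_iInter₂, Metric.biInter_gt_ball, Metric.closedBall_zero, hc] at h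

theorem abs_theta_sub_theta_le_indicator {ξ δ : ℝ} {x y : ℝ → ℝ} {t : ℝ}
    (h : |x t - y t| < δ) :
    |Theta ξ x t - Theta ξ y t| ≤ (x ⁻¹' Metric.ball ξ δ).indicator 1 t := by
  by_cases hmem : t ∈ x ⁻¹' Metric.ball ξ δ
  · rw [indicator_of_mem hmem, Pi.one_apply]
    unfold Theta
    split_ifs <;> norm_num
  · rw [indicator_of_notMem hmem]
    simp only [mem_preimage, Metric.mem_ball, Real.dist_eq, not_lt, le_abs'] at hmem
    rw [abs_lt] at h
    have hside : x t ≤ ξ ↔ y t ≤ ξ := by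
      constructor <;> intro <;> rcases hmem with _ | _ <;> linarith
    simp only [Theta, hside, sub_self, abs_zero, le_refl]

theorem intervalIntegral_le_measureReal_of_le_indicator {a b : ℝ} (hab : a ≤ b) {g : ℝ → ℝ}
    {A : Set ℝ} (hg0 : ∀ t, 0 ≤ g t) (hg : ∀ t ∈ Icc a b, g t ≤ A.indicator 1 t) :
    ∫ t in a..b, g t ≤ (volume.restrict (Icc a b)).real A := by
  set μ := volume.restrict (Icc a b)
  have hB := measurableSet_toMeasurable μ A
  have hgB : ∀ t ∈ Icc a b, g t ≤ (toMeasurable μ A).indicator 1 t := fun t ht =>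
    (hg t ht).trans (indicator_le_indicator_of_subset (subset_toMeasurable μ A)
      (fun _ => zero_le_one) t)
  calc ∫ t in a..b, g t = ∫ t in Icc a b, g t := by
        rw [intervalIntegral.integral_of_le hab, integral_Icc_eq_integral_Ioc]
    _ ≤ ∫ t in Icc a b, (toMeasurable μ A).indicator 1 t :=
        integral_mono_of_nonneg (ae_of_all _ hg0) ((integrable_const 1).indicator hB)
          ((ae_restrict_iff' measurableSet_Icc).2 (ae_of_all _ hgB))
    _ = μ.real A := by
        rw [integral_indicator_one hB, measureReal_def, measureReal_def, measure_toMeasurable]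

theorem stmt5_general (ξ T : ℝ) (hT : 0 < T) (M : ℕ) (x : ℝ → ℝ)
    (hx : DifferentiableOn ℝ x (Icc 0 T))
    (tc : Fin (M + 1) → ℝ)
    (hall : ∀ s ∈ Icc (0:ℝ) T, derivWithin x (Icc (0:ℝ) T) s = 0 → ∃ j, tc j = s) :
    ∀ ε > 0, ∃ δ > 0, ∀ y : ℝ → ℝ, DifferentiableOn ℝ y (Icc 0 T) →
      (∀ t ∈ Icc (0:ℝ) T, |x t - y t| < δ) →
      ∫ t in (0:ℝ)..T, |Theta ξ x t - Theta ξ y t| < ε := by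
  intro ε hε
  have hcrit : {t ∈ Icc 0 T | derivWithin x (Icc 0 T) t = 0}.Finite :=
    (finite_range tc).subset fun t ht => hall t ht.1 ht.2
  have hlevel : volume.restrict (Icc 0 T) (x ⁻¹' {ξ}) = 0 := by
    rw [Measure.restrict_apply' measurableSet_Icc, inter_comm]
    exact (countable_inter_preimage_singleton_of_finite_critical isClosed_Icc hx hcrit
      ξ).measure_zero _
  have hsmall := tendsto_measure_preimage_ball_nhdsGT_zero
    (hx.continuousOn.aemeasurable measurableSet_Icc) hlevel
  obtain ⟨δ, hδε, hδ⟩ :=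
    ((hsmall.eventually (gt_mem_nhds (ENNReal.ofReal_pos.2 hε))).and self_mem_nhdsWithin).exists
  refine ⟨δ, hδ, fun y _ hxy => ?_⟩
  calc ∫ t in (0:ℝ)..T, |Theta ξ x t - Theta ξ y t|
      ≤ (volume.restrict (Icc 0 T)).real (x ⁻¹' Metric.ball ξ δ) :=
        intervalIntegral_le_measureReal_of_le_indicator hT.le (fun _ => abs_nonneg _)
          fun t ht => abs_theta_sub_theta_le_indicator (hxy t ht)
    _ < ε := ENNReal.toReal_lt_of_lt_ofReal hδε

/-- Theorem 2.6: let `x : [0,T] → ℝ` be differentiable with at most `M` alternating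
critical points `tc 0 < tc 1 < ⋯ < tc M` (every critical point of `x` is among them, and
consecutive ones lie on opposite sides of the threshold `ξ`). Then for every `ε > 0` there
is `δ > 0` such that every differentiable `y` with `sup |x - y| < δ` satisfies
`‖Θ_ξ(x) - Θ_ξ(y)‖₁ < ε`. -/
theorem stmt5 (ξ T : ℝ) (hT : 0 < T) (M : ℕ) (x : ℝ → ℝ)
    (hx : DifferentiableOn ℝ x (Icc 0 T))
    (tc : Fin (M + 1) → ℝ) (htc : StrictMono tc)
    (htcmem : ∀ j, tc j ∈ Icc (0:ℝ) T)
    (htcrit : ∀ j, derivWithin x (Icc (0:ℝ) T) (tc j) = 0)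
    (hall : ∀ s ∈ Icc (0:ℝ) T, derivWithin x (Icc (0:ℝ) T) s = 0 → ∃ j, tc j = s)
    (halt : ∀ i : Fin M,
      Real.sign (x (tc i.castSucc) - ξ) = - Real.sign (x (tc i.succ) - ξ)) :
    ∀ ε > 0, ∃ δ > 0, ∀ y : ℝ → ℝ, DifferentiableOn ℝ y (Icc 0 T) →
      (∀ t ∈ Icc (0:ℝ) T, |x t - y t| < δ) →
      ∫ t in (0:ℝ)..T, |Theta ξ x t - Theta ξ y t| < ε :=
  stmt5_general ξ T hT M x hx tc hall
end

section
/- Fix positive constants C, R_{nA}, R_{nB}, V_DD and let Δ ≥ 0. Define V : [0,∞) → ℝ by V(t) = V_DD e^{−t/(C R_{nA})} for t ∈ [0,Δ], and V(t) = V(Δ) e^{−(1/(C R_{nA}) + 1/(C R_{nB}))(t−Δ)} for t ≥ Δ. Let δ(Δ) = (log 2 · C R_{nA} R_{nB} − Δ R_{nB})/(R_{nA} + R_{nB}) + Δ if 0 ≤ Δ < log 2 · C R_{nA}, and δ(Δ) = log 2 · C R_{nA} if Δ ≥ log 2 · C R_{nA}. Then V(δ(Δ)) = V_DD/2, and δ(Δ)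 is the unique time t ≥ 0 with V(t) = V_DD/2. -/
open Set Real

/-!
Both pieces of `V` are `VDD` times a decaying exponential, and they agree at `Δ`, so `V` is
strictly antitone on `[0, ∞)` and takes the value `VDD / 2` at most once. It remains to check
that `δ` is a crossing: if `Δ < log 2 · C R_nA` the first piece is still above `VDD / 2` at `Δ`
and the crossing happens on the second piece, where the total exponent reaches `-log 2` at the
stated time; otherwise it happens on the first piece at `log 2 · C R_nA`.
-/

lemma mul_exp_neg_log_two (a : ℝ) : a * exp (-log 2) = a / 2 := by
  rw [exp_neg, exp_log two_pos, div_eq_mul_inv]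

section NorTrajectory

variable {C RnA RnB VDD Δ : ℝ} {V : ℝ → ℝ}

lemma nor_trajectory_strictAntiOn (hC : 0 < C) (hA : 0 < RnA) (hB : 0 < RnB) (hV : 0 < VDD)
    (hΔ : 0 ≤ Δ) (hV1 : ∀ t ∈ Icc (0:ℝ) Δ, V t = VDD * exp (-t/(C*RnA)))
    (hV2 : ∀ t ≥ Δ, V t =
      VDD * exp (-Δ/(C*RnA)) * exp (-(1/(C*RnA) + 1/(C*RnB))*(t-Δ))) :
    StrictAntiOn V (Ici 0) := by
  have hfirst : StrictAntiOn V (Icc 0 Δ) := fun x hx y hy hxy => by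
    rw [hV1 x hx, hV1 y hy]
    gcongr
  have hsecond : StrictAntiOn V (Ici Δ) := fun x hx y hy hxy => by
    rw [hV2 x hx, hV2 y hy, neg_mul, neg_mul]
    gcongr
  rw [← Icc_union_Ici_eq_Ici hΔ]
  exact hfirst.union hsecond (isGreatest_Icc hΔ) isLeast_Ici

lemma nor_trajectory_crossing_of_lt (hC : 0 < C) (hA : 0 < RnA) (hB : 0 < RnB)
    (hV2 : ∀ t ≥ Δ, V t =
      VDD * exp (-Δ/(C*RnA)) * exp (-(1/(C*RnA) + 1/(C*RnB))*(t-Δ)))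
    (hlt : Δ < log 2 * C * RnA) :
    Δ ≤ (log 2 * C * RnA * RnB - Δ * RnB)/(RnA + RnB) + Δ ∧
      V ((log 2 * C * RnA * RnB - Δ * RnB)/(RnA + RnB) + Δ) = VDD/2 := by
  have hΔδ : Δ ≤ (log 2 * C * RnA * RnB - Δ * RnB)/(RnA + RnB) + Δ := by
    have : 0 ≤ log 2 * C * RnA * RnB - Δ * RnB := by nlinarith
    linarith [div_nonneg this (add_pos hA hB).le]
  refine ⟨hΔδ, ?_⟩
  rw [hV2 _ hΔδ, mul_assoc, ← exp_add, ← mul_exp_neg_log_two]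
  congr 2
  field_simp
  ring

lemma nor_trajectory_crossing_of_le (hC : 0 < C) (hA : 0 < RnA)
    (hV1 : ∀ t ∈ Icc (0:ℝ) Δ, V t = VDD * exp (-t/(C*RnA))) (hle : log 2 * C * RnA ≤ Δ) :
    V (log 2 * C * RnA) = VDD/2 := by
  rw [hV1 _ ⟨by positivity, hle⟩, ← mul_exp_neg_log_two]
  congr 2
  field_simp

end NorTrajectory

/-- Theorem 6.2 / 6.4 (rising input transitions): the output trajectory `V` of the
advanced NOR gate model for two rising input transitions separated by `Δ ≥ 0` decays as
`V_DD e^{-t/(C R_nA)}` for `t ∈ [0,Δ]` and then as `V(Δ) e^{-(1/(C R_nA)+1/(C R_nB))(t-Δ)}`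
for `t ≥ Δ`; the MIS delay `δ` given by the stated case distinction is the unique
nonnegative time at which `V` crosses the threshold `V_DD / 2`. -/
theorem stmt9 (C RnA RnB VDD Δ : ℝ)
    (hC : 0 < C) (hA : 0 < RnA) (hB : 0 < RnB) (hV : 0 < VDD) (hΔ : 0 ≤ Δ)
    (V : ℝ → ℝ)
    (hV1 : ∀ t ∈ Icc (0:ℝ) Δ, V t = VDD * Real.exp (-t/(C*RnA)))
    (hV2 : ∀ t ≥ Δ, V t =
      VDD * Real.exp (-Δ/(C*RnA)) * Real.exp (-(1/(C*RnA) + 1/(C*RnB))*(t-Δ)))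
    (δ : ℝ)
    (hδ : δ = if Δ < Real.log 2 * C * RnA
      then (Real.log 2 * C * RnA * RnB - Δ * RnB)/(RnA + RnB) + Δ
      else Real.log 2 * C * RnA) :
    V δ = VDD/2 ∧ ∀ s ≥ 0, V s = VDD/2 → s = δ := by
  have hanti := nor_trajectory_strictAntiOn hC hA hB hV hΔ hV1 hV2
  suffices hcross : 0 ≤ δ ∧ V δ = VDD/2 from
    ⟨hcross.2, fun s hs hVs => hanti.injOn hs hcross.1 (hVs.trans hcross.2.symm)⟩
  split_ifs at hδ with hlt <;> subst hδ
  · obtain ⟨hΔδ, hcross⟩ := nor_trajectory_crossing_of_lt hC hA hB hV2 hlt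
    exact ⟨hΔ.trans hΔδ, hcross⟩
  · exact ⟨by positivity, nor_trajectory_crossing_of_le hC hA hV1 (not_lt.1 hlt)⟩
end

section
/- Let α₁ > 0, α₂ > 0, R > 0, and set a = (α₁+α₂)/(2R), b = α₂/(2R). Then for every real Δ, the quadratic s² + (a+Δ)s + α₂Δ/(2R) = 0 has two real roots s₁ = (−(a+Δ) + √χ)/2 and s₂ = (−(a+Δ) − √χ)/2, where χ = (a+Δ)² − 2α₂Δ/R ≥ 0; moreover s₁s₂ = α₂Δ/(2R), s₁ + s₂ = −(a+Δ), and s₂ − s₁ = −√χ. In particular, Δ² + (2a − 4b)Δ + a² ≥ 0 for all Δ ∈ ℝ. -/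
open Real

/-- Lemma 6.3: with `a = (α₁+α₂)/(2R)` and `b = α₂/(2R)`, for every real `Δ` the
quadratic `s² + (a+Δ)s + α₂Δ/(2R)` has two real roots
`s₁ = (-(a+Δ)+√χ)/2`, `s₂ = (-(a+Δ)-√χ)/2`, where `χ = (a+Δ)² - 2α₂Δ/R ≥ 0`; and
`s₁ s₂ = α₂Δ/(2R)`, `s₁ + s₂ = -(a+Δ)`, `s₂ - s₁ = -√χ`. In particular
`Δ² + (2a-4b)Δ + a² ≥ 0` for all `Δ`. -/
theorem stmt10 (α₁ α₂ R : ℝ) (hα₁ : 0 < α₁) (hα₂ : 0 < α₂) (hR : 0 < R) (Δ : ℝ) :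
    let a := (α₁ + α₂)/(2*R)
    let b := α₂/(2*R)
    let χ := (a + Δ)^2 - 2*α₂*Δ/R
    let s₁ := (-(a + Δ) + Real.sqrt χ)/2
    let s₂ := (-(a + Δ) - Real.sqrt χ)/2
    0 ≤ χ ∧
    s₁^2 + (a + Δ)*s₁ + α₂*Δ/(2*R) = 0 ∧
    s₂^2 + (a + Δ)*s₂ + α₂*Δ/(2*R) = 0 ∧
    s₁*s₂ = α₂*Δ/(2*R) ∧ s₁ + s₂ = -(a + Δ) ∧ s₂ - s₁ = -Real.sqrt χ ∧
    Δ^2 + (2*a - 4*b)*Δ + a^2 ≥ 0 := by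
  intro a b χ s₁ s₂
  have hR' : (R:ℝ) ≠ 0 := ne_of_gt hR
  have hχ : 0 ≤ χ := by
    have h1 : χ = (Δ + α₁/(2*R) - α₂/(2*R))^2 + (α₁/R)*(α₂/R) := by
      simp only [χ, a]; field_simp; ring
    have h2 : 0 ≤ (α₁/R)*(α₂/R) := by positivity
    rw [h1]; positivity
  have hc : R * R⁻¹ = 1 := mul_inv_cancel₀ hR'
  have hs : Real.sqrt χ ^ 2 = χ := Real.sq_sqrt hχ
  refine ⟨hχ, ?_, ?_, ?_, by simp only [s₁, s₂]; ring, by simp only [s₁, s₂]; ring, ?_⟩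
  · simp only [s₁]
    linear_combination (1/4 : ℝ) * hs
  · simp only [s₂]
    linear_combination (1/4 : ℝ) * hs
  · simp only [s₁, s₂]
    linear_combination (-1/4 : ℝ) * hs
  · have : Δ^2 + (2*a - 4*b)*Δ + a^2 = χ := by
      simp only [χ, a, b]; field_simp; ring
    linarith
end

section
/- Let α₁ > 0, α₂ > 0, R > 0, Δ > 0, and set a = (α₁+α₂)/(2R), d = a + Δ, c' = α₂Δ/(2R), χ = d² − 4c' (which is nonnegative), and A = (a(d−√χ)/2 − α₂Δ/(2R))/(−√χ) when χ > 0. Then for all t ≥ 0, ∫₀^t ds / (α₁/(s+Δ) + α₂/s + 2R) = (1/(2R)) [ t + (A − a)·log(1 + 2t/(d+√χ)) − A·log(1 + 2t/(d−√χ)) ], where the integrand is extended by the value 0 at s = 0. -/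
open Real

/-! The conductance integrand equals `(1 - (a s + c') / (s² + d s + c')) / (2R)` on `[0, ∞)`,
including at `s = 0`, where both sides vanish. The quadratic has discriminant `χ > 0` and both
roots `-(d ± √χ)/2` negative, so partial fractions turn the integrand into
`1 + 2(A - a)/(2s + d + √χ) - 2A/(2s + d - √χ)` up to the factor `1/(2R)`, and the
logarithms of the statement are its antiderivative. -/

lemma hasDerivAt_log_one_add_two_mul_div {e s : ℝ} (he : e ≠ 0) (hs : 2 * s + e ≠ 0) :
    HasDerivAt (fun s => log (1 + 2 * s / e)) (2 / (2 * s + e)) s := by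
  have hlin : HasDerivAt (fun s => 1 + 2 * s / e) (2 / e) s := by
    simpa using ((hasDerivAt_id s).const_mul 2 |>.div_const e).const_add 1
  have hquot : 1 + 2 * s / e = (2 * s + e) / e := by field_simp; ring
  convert hlin.log (hquot ▸ div_ne_zero hs he) using 1
  rw [hquot, div_div_div_cancel_right₀ he]

lemma integral_one_add_two_div_add_two_div {e₁ e₂ t : ℝ} (B C : ℝ) (he₁ : 0 < e₁)
    (he₂ : 0 < e₂) (ht : 0 ≤ t) :
    ∫ s in (0:ℝ)..t, (1 + 2 * B / (2 * s + e₁) + 2 * C / (2 * s + e₂)) =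
      t + B * log (1 + 2 * t / e₁) + C * log (1 + 2 * t / e₂) := by
  have hne : ∀ s ∈ Set.uIcc 0 t, ∀ e : ℝ, 0 < e → 2 * s + e ≠ 0 := by
    intro s hs e he
    rw [Set.uIcc_of_le ht] at hs
    linarith [hs.1]
  have hderiv : ∀ s ∈ Set.uIcc 0 t,
      HasDerivAt (fun s => s + B * log (1 + 2 * s / e₁) + C * log (1 + 2 * s / e₂))
        (1 + 2 * B / (2 * s + e₁) + 2 * C / (2 * s + e₂)) s := by
    intro s hs
    exact (((hasDerivAt_id s).add
      ((hasDerivAt_log_one_add_two_mul_div he₁.ne' (hne s hs e₁ he₁)).const_mul B)).add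
      ((hasDerivAt_log_one_add_two_mul_div he₂.ne' (hne s hs e₂ he₂)).const_mul C)).congr_deriv
      (by ring)
  have hcont : ContinuousOn (fun s : ℝ => 1 + 2 * B / (2 * s + e₁) + 2 * C / (2 * s + e₂))
      (Set.uIcc 0 t) := by
    refine ((continuousOn_const.add (continuousOn_const.div (by fun_prop) ?_)).add
      (continuousOn_const.div (by fun_prop) ?_))
    · exact fun s hs => hne s hs e₁ he₁
    · exact fun s hs => hne s hs e₂ he₂
  rw [intervalIntegral.integral_eq_sub_of_hasDerivAt hderiv hcont.intervalIntegrable]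
  simp

lemma div_quadratic_eq_partial_fractions {a c' d r A s : ℝ} (hr : r ≠ 0)
    (hr2 : r ^ 2 = d ^ 2 - 4 * c') (hA : A = (a * (d - r) / 2 - c') / (-r))
    (hs₁ : 2 * s + (d + r) ≠ 0) (hs₂ : 2 * s + (d - r) ≠ 0) :
    (a * s + c') / (s ^ 2 + d * s + c') =
      2 * (a - A) / (2 * s + (d + r)) + 2 * A / (2 * s + (d - r)) := by
  have hfactor : s ^ 2 + d * s + c' = (2 * s + (d + r)) * (2 * s + (d - r)) / 4 := by
    linear_combination (1 / 4 : ℝ) * hr2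
  rw [hfactor, div_add_div _ _ hs₁ hs₂, div_div_eq_mul_div,
    div_eq_div_iff (mul_ne_zero hs₁ hs₂) (mul_ne_zero hs₁ hs₂), hA]
  field_simp
  ring

lemma conductance_inv_eq {α₁ α₂ R Δ a d c' s : ℝ} (hα₁ : 0 < α₁) (hα₂ : 0 < α₂) (hR : 0 < R)
    (hΔ : 0 < Δ) (ha : a = (α₁ + α₂) / (2 * R)) (hd : d = a + Δ) (hc' : c' = α₂ * Δ / (2 * R))
    (hs : 0 ≤ s) :
    (if s = 0 then 0 else 1 / (α₁ / (s + Δ) + α₂ / s + 2 * R)) =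
      1 / (2 * R) * (1 - (a * s + c') / (s ^ 2 + d * s + c')) := by
  subst ha hd hc'
  rcases hs.eq_or_lt with rfl | hs
  · simp [hα₂.ne', hΔ.ne', hR.ne']
  · rw [if_neg hs.ne']
    field_simp
    ring

lemma add_sq_sub_four_mul_pos {a b Δ : ℝ} (hab : b < a) (hΔ : 0 < Δ) :
    0 < (a + Δ) ^ 2 - 4 * b * Δ := by
  nlinarith [sq_nonneg (a - Δ)]

/-- Lemma 6.4 (explicit integral): for `Δ > 0` and `t ≥ 0`,
`∫₀ᵗ ds / (α₁/(s+Δ) + α₂/s + 2R)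
  = (1/(2R)) [t + (A-a) log(1 + 2t/(d+√χ)) - A log(1 + 2t/(d-√χ))]`,
with `a = (α₁+α₂)/(2R)`, `d = a+Δ`, `χ = d² - 2α₂Δ/R`,
`A = (a(d-√χ)/2 - α₂Δ/(2R)) / (-√χ)`, and the integrand extended by `0` at `s = 0`. -/
theorem stmt11 (α₁ α₂ R Δ : ℝ) (hα₁ : 0 < α₁) (hα₂ : 0 < α₂) (hR : 0 < R) (hΔ : 0 < Δ) :
    let a := (α₁ + α₂)/(2*R)
    let d := a + Δ
    let χ := d^2 - 2*α₂*Δ/R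
    let A := (a*(d - Real.sqrt χ)/2 - α₂*Δ/(2*R))/(-Real.sqrt χ)
    ∀ t ≥ 0, (∫ s in (0:ℝ)..t,
        (if s = 0 then 0 else 1/(α₁/(s+Δ) + α₂/s + 2*R))) =
      (1/(2*R)) * (t + (A - a) * Real.log (1 + 2*t/(d + Real.sqrt χ))
        - A * Real.log (1 + 2*t/(d - Real.sqrt χ))) := by
  intro a d χ A t ht
  set c' := α₂ * Δ / (2 * R)
  set r := √χ
  have hχ : χ = d ^ 2 - 4 * c' := by
    simp only [χ, c']
    field_simp
    ring
  have hχpos : 0 < χ := by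
    have hab : α₂ / (2 * R) < (α₁ + α₂) / (2 * R) := by gcongr; linarith
    convert add_sq_sub_four_mul_pos hab hΔ using 1
    simp only [χ, d, a]
    field_simp
    ring
  have hr : 0 < r := sqrt_pos.mpr hχpos
  have hr2 : r ^ 2 = d ^ 2 - 4 * c' := (sq_sqrt hχpos.le).trans hχ
  have hrd : r < d := by
    have : 0 < c' := by positivity
    nlinarith [show 0 < d by positivity]
  calc (∫ s in (0:ℝ)..t, (if s = 0 then 0 else 1/(α₁/(s+Δ) + α₂/s + 2*R)))
      = ∫ s in (0:ℝ)..t,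
          1 / (2 * R) * (1 + 2 * (A - a) / (2 * s + (d + r)) + 2 * (-A) / (2 * s + (d - r))) := by
        refine intervalIntegral.integral_congr fun s hs => ?_
        rw [Set.uIcc_of_le ht] at hs
        rw [conductance_inv_eq hα₁ hα₂ hR hΔ rfl rfl rfl hs.1,
          div_quadratic_eq_partial_fractions hr.ne' hr2 rfl (by linarith [hs.1])
            (by linarith [hs.1])]
        ring
    _ = _ := by
        rw [intervalIntegral.integral_const_mul,
          integral_one_add_two_div_add_two_div _ _ (by linarith) (by linarith) ht]
        ring
end

section
/- Let α₁ > 0, α₂ > 0, R > 0, C > 0, V_DD > 0, Δ > 0 and V₀ ∈ ℝ. With a = (α₁+α₂)/(2R), d = a+Δ, χ = d² − 2α₂Δ/R, and A = (a(d−√χ)/2 − α₂Δ/(2R))/(−√χ), define V(t) = V_DD + (V₀ − V_DD) e^{−t/(2RC)} (1 + 2t/(d+√χ))^{(a−A)/(2RC)} (1 + 2t/(d−√χ))^{A/(2RC)} for t > 0 (assuming χ > 0). Then V is differentiable on (0,∞), V(t) → V₀ as t → 0⁺, and V satisfies the differential equation dV/dt = (V_DD − V(t)) / (C(α₁/(t+Δ)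 + α₂/t + 2R)) for all t > 0. -/
open Set Real Filter

/-- The explicit output voltage trajectory `V_out^{T↓↓₊}` of the advanced NOR gate model:
`V(t) = V_DD + (V₀-V_DD) e^{-t/(2RC)} (1+2t/(d+√χ))^{(a-A)/(2RC)} (1+2t/(d-√χ))^{A/(2RC)}`
is differentiable on `(0,∞)`, tends to `V₀` as `t → 0⁺`, and satisfies the ODE
`dV/dt = (V_DD - V(t)) / (C (α₁/(t+Δ) + α₂/t + 2R))` for all `t > 0` (assuming `χ > 0`). -/
theorem stmt12 (α₁ α₂ R C VDD Δ V₀ : ℝ)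
    (hα₁ : 0 < α₁) (hα₂ : 0 < α₂) (hR : 0 < R) (hC : 0 < C) (hV : 0 < VDD) (hΔ : 0 < Δ) :
    let a := (α₁ + α₂)/(2*R)
    let d := a + Δ
    let χ := d^2 - 2*α₂*Δ/R
    let A := (a*(d - Real.sqrt χ)/2 - α₂*Δ/(2*R))/(-Real.sqrt χ)
    let V : ℝ → ℝ := fun t => VDD + (V₀ - VDD) * Real.exp (-t/(2*R*C)) *
      (1 + 2*t/(d + Real.sqrt χ)) ^ ((a - A)/(2*R*C)) *
      (1 + 2*t/(d - Real.sqrt χ)) ^ (A/(2*R*C))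
    0 < χ →
      DifferentiableOn ℝ V (Ioi 0) ∧
      Tendsto V (nhdsWithin 0 (Ioi 0)) (nhds V₀) ∧
      ∀ t > 0, HasDerivAt V ((VDD - V t)/(C*(α₁/(t+Δ) + α₂/t + 2*R))) t := by
  intro a d χ A V hχ
  have ha : a = (α₁ + α₂)/(2*R) := rfl
  have hd : d = a + Δ := rfl
  have hχd : χ = d^2 - 2*α₂*Δ/R := rfl
  have hAd : A = (a*(d - Real.sqrt χ)/2 - α₂*Δ/(2*R))/(-Real.sqrt χ) := rfl
  have hVd : V = fun t => VDD + (V₀ - VDD) * Real.exp (-t/(2*R*C)) *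
      (1 + 2*t/(d + Real.sqrt χ)) ^ ((a - A)/(2*R*C)) *
      (1 + 2*t/(d - Real.sqrt χ)) ^ (A/(2*R*C)) := rfl
  set s := Real.sqrt χ with hs
  have hs2 : s^2 = χ := Real.sq_sqrt hχ.le
  have hs0 : 0 < s := Real.sqrt_pos.mpr hχ
  have ha0 : 0 < a := by rw [ha]; positivity
  have hd0 : 0 < d := by rw [hd]; linarith
  have hχ2 : s^2 = d^2 - 2*α₂*Δ/R := hs2.trans hχd
  have hsd : s < d := by
    have hp : 0 < 2*α₂*Δ/R := by positivity
    have hlt : s^2 < d^2 := by rw [hχ2]; linarith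
    exact lt_of_pow_lt_pow_left₀ 2 hd0.le hlt
  have hds : 0 < d + s := by linarith
  have hdm : 0 < d - s := by linarith
  have hA' : A * s = α₂*Δ/(2*R) - a*(d-s)/2 := by
    rw [hAd]
    field_simp
    ring
  have key : ∀ t, 0 < t → HasDerivAt V ((VDD - V t)/(C*(α₁/(t+Δ) + α₂/t + 2*R))) t := by
    intro t ht
    have htΔ : 0 < t + Δ := by linarith
    have hb1 : 0 < 1 + 2*t/(d+s) := by positivity
    have hb2 : 0 < 1 + 2*t/(d-s) := by positivity
    have hD : 0 < α₁/(t+Δ) + α₂/t + 2*R := by positivity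
    have hn1 : 0 < d + s + 2*t := by linarith
    have hn2 : 0 < d - s + 2*t := by linarith
    have hM : 0 < 4*t^2 + 4*d*t + 2*α₂*Δ/R := by positivity
    -- derivative construction
    have hE : HasDerivAt (fun u : ℝ => Real.exp (-u/(2*R*C)))
        (Real.exp (-t/(2*R*C)) * (-1/(2*R*C))) t := by
      have h0 : HasDerivAt (fun u : ℝ => -u/(2*R*C)) (-1/(2*R*C)) t := by
        simpa using ((hasDerivAt_id t).neg.div_const (2*R*C))
      simpa [mul_comm] using h0.exp
    have hB1 : HasDerivAt (fun u : ℝ => 1 + 2*u/(d+s)) (2/(d+s)) t := by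
      simpa using (((hasDerivAt_id t).const_mul (2:ℝ)).div_const (d+s)).const_add 1
    have hB2 : HasDerivAt (fun u : ℝ => 1 + 2*u/(d-s)) (2/(d-s)) t := by
      simpa using (((hasDerivAt_id t).const_mul (2:ℝ)).div_const (d-s)).const_add 1
    have hP : HasDerivAt (fun u : ℝ => (1 + 2*u/(d+s)) ^ ((a-A)/(2*R*C)))
        ((2/(d+s)) * ((a-A)/(2*R*C)) * (1 + 2*t/(d+s)) ^ ((a-A)/(2*R*C) - 1)) t :=
      hB1.rpow_const (Or.inl hb1.ne')
    have hQ : HasDerivAt (fun u : ℝ => (1 + 2*u/(d-s)) ^ (A/(2*R*C)))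
        ((2/(d-s)) * (A/(2*R*C)) * (1 + 2*t/(d-s)) ^ (A/(2*R*C) - 1)) t :=
      hB2.rpow_const (Or.inl hb2.ne')
    have hfull := (((hE.const_mul (V₀ - VDD)).mul hP).mul hQ).const_add VDD
    -- the scalar ODE identity
    have h1 : 2/(d+s)*((a-A)/(2*R*C))/(1+2*t/(d+s)) = 2*(a-A)/((2*R*C)*(d+s+2*t)) := by
      rw [div_eq_div_iff (by positivity) (by positivity)]
      field_simp
    have h2 : 2/(d-s)*(A/(2*R*C))/(1+2*t/(d-s)) = 2*A/((2*R*C)*(d-s+2*t)) := by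
      rw [div_eq_div_iff (by positivity) (by positivity)]
      field_simp
    have h3 : 2*(a-A)/((2*R*C)*(d+s+2*t)) + 2*A/((2*R*C)*(d-s+2*t))
        = (4*a*t + 2*α₂*Δ/R)/((2*R*C)*(4*t^2 + 4*d*t + 2*α₂*Δ/R)) := by
      rw [div_add_div _ _ (by positivity) (by positivity),
        div_eq_div_iff (by positivity) (by positivity)]
      linear_combination (4*(2*R*C)^2*(4*t^2 + 4*d*t + 2*α₂*Δ/R)) * hA'
        + ((2*R*C)^2*(4*a*t + 2*α₂*Δ/R)) * hχ2
    have h4 : -1/(2*R*C) + (4*a*t + 2*α₂*Δ/R)/((2*R*C)*(4*t^2 + 4*d*t + 2*α₂*Δ/R))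
        = -(1/(C*(α₁/(t+Δ) + α₂/t + 2*R))) := by
      rw [hd, ha]
      have hM2 : (4*t^2 + 4*((α₁+α₂)/(2*R)+Δ)*t + 2*α₂*Δ/R) ≠ 0 := by positivity
      field_simp
      ring
    have main : -1/(2*R*C) + 2/(d+s)*((a-A)/(2*R*C))/(1+2*t/(d+s))
        + 2/(d-s)*(A/(2*R*C))/(1+2*t/(d-s))
        = -(1/(C*(α₁/(t+Δ) + α₂/t + 2*R))) := by
      rw [h1, h2]
      linear_combination h3 + h4
    have goalEq : ((V₀ - VDD) * (Real.exp (-t/(2*R*C)) * (-1/(2*R*C)))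
          * ((1 + 2*t/(d+s)) ^ ((a-A)/(2*R*C)))
        + (V₀ - VDD) * Real.exp (-t/(2*R*C))
          * ((2/(d+s)) * ((a-A)/(2*R*C)) * (1 + 2*t/(d+s)) ^ ((a-A)/(2*R*C) - 1)))
          * ((1 + 2*t/(d-s)) ^ (A/(2*R*C)))
        + (V₀ - VDD) * Real.exp (-t/(2*R*C)) * ((1 + 2*t/(d+s)) ^ ((a-A)/(2*R*C)))
          * ((2/(d-s)) * (A/(2*R*C)) * (1 + 2*t/(d-s)) ^ (A/(2*R*C) - 1))
        = (VDD - V t)/(C*(α₁/(t+Δ) + α₂/t + 2*R)) := by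
      simp only [hVd]
      rw [Real.rpow_sub_one hb1.ne', Real.rpow_sub_one hb2.ne']
      linear_combination ((V₀ - VDD) * Real.exp (-t/(2*R*C))
        * ((1 + 2*t/(d+s)) ^ ((a-A)/(2*R*C)))
        * ((1 + 2*t/(d-s)) ^ (A/(2*R*C)))) * main
    exact goalEq ▸ hfull
  have hV0 : V 0 = V₀ := by
    rw [hVd]
    norm_num
  have hcont : ContinuousAt V 0 := by
    rw [hVd]
    have c1 : ContinuousAt (fun u : ℝ => Real.exp (-u/(2*R*C))) 0 := by fun_prop
    have c2 : ContinuousAt (fun u : ℝ => (1 + 2*u/(d+s)) ^ ((a-A)/(2*R*C))) 0 :=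
      ContinuousAt.rpow_const (by fun_prop) (Or.inl (by norm_num))
    have c3 : ContinuousAt (fun u : ℝ => (1 + 2*u/(d-s)) ^ (A/(2*R*C))) 0 :=
      ContinuousAt.rpow_const (by fun_prop) (Or.inl (by norm_num))
    exact continuousAt_const.add (((continuousAt_const.mul c1).mul c2).mul c3)
  refine ⟨fun t ht => ((key t (mem_Ioi.mp ht)).differentiableAt).differentiableWithinAt, ?_, key⟩
  have h5 : Tendsto V (nhdsWithin 0 (Ioi 0)) (nhds (V 0)) :=
    hcont.tendsto.mono_left (nhdsWithin_le_nhds (s := Ioi 0))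
  rwa [hV0] at h5
end

section
/- For every p > 0 the equation y = p·log(1 + y/p) + log 2 has a unique positive solution y₀. Equivalently, the equation e^{−y}(1 + y/p)^p = 1/2 has a unique solution y > 0. -/
open Real

/-! The map `x ↦ x - log (1 + x)` vanishes at `0`, is strictly increasing on `[0, ∞)` (because
`log t < t - 1` for `t ≠ 1`) and tends to `+∞`, so it takes every positive value exactly once on
`(0, ∞)`. Substituting `y = p x` turns the first equation into `x - log (1 + x) = log 2 / p`, and
taking logarithms turns the second into the first. -/

open Filter Set

theorem StrictMonoOn.existsUnique_Ioi_eq {α δ : Type*} [ConditionallyCompleteLinearOrder α]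
    [TopologicalSpace α] [OrderTopology α] [DenselyOrdered α] [LinearOrder δ] [TopologicalSpace δ]
    [OrderClosedTopology δ] {f : α → δ} {a : α} {c : δ} (hmono : StrictMonoOn f (Ici a))
    (hf : ContinuousOn f (Ici a)) (htop : Tendsto f atTop atTop) (hc : f a < c) :
    ∃! x, a < x ∧ f x = c := by
  obtain ⟨x, hx, rfl⟩ := intermediate_value_Ioi hf htop hc
  exact ⟨x, ⟨hx, rfl⟩, fun y ⟨hy, hxy⟩ =>
    hmono.injOn (mem_Ici_of_Ioi hy) (mem_Ici_of_Ioi hx) hxy⟩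

namespace Real

theorem strictMonoOn_sub_log_one_add : StrictMonoOn (fun x : ℝ => x - log (1 + x)) (Ici 0) := by
  intro a (ha : 0 ≤ a) b (hb : 0 ≤ b) hab
  have ha' : 0 < 1 + a := by linarith
  have hquot : log ((1 + b) / (1 + a)) < b - a := calc
    log ((1 + b) / (1 + a)) < (1 + b) / (1 + a) - 1 :=
      log_lt_sub_one_of_pos (by positivity) (by rw [Ne, div_eq_one_iff_eq ha'.ne']; linarith)
    _ = (b - a) / (1 + a) := by field_simp; ring
    _ ≤ b - a := div_le_self (by linarith) (by linarith)
  rw [log_div (by linarith) ha'.ne'] at hquot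
  linarith

theorem continuousOn_sub_log_one_add : ContinuousOn (fun x : ℝ => x - log (1 + x)) (Ici 0) :=
  continuousOn_id.sub <| ContinuousOn.log (f := fun x => 1 + x) (by fun_prop) fun x (hx : 0 ≤ x) => by
    linarith

theorem tendsto_sub_log_one_add_atTop : Tendsto (fun x : ℝ => x - log (1 + x)) atTop atTop := by
  refine tendsto_atTop_mono' _ ?_ <|
    tendsto_atTop_add_const_right _ (1 / 2 - log 2) (tendsto_id.atTop_div_const two_pos)
  filter_upwards [eventually_ge_atTop 0] with x hx
  have hhalf := log_le_sub_one_of_pos (show 0 < (1 + x) / 2 by positivity)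
  rw [log_div (by linarith) two_ne_zero] at hhalf
  simp only [id]
  linarith

theorem existsUnique_pos_sub_log_one_add_eq {c : ℝ} (hc : 0 < c) :
    ∃! x : ℝ, 0 < x ∧ x - log (1 + x) = c :=
  strictMonoOn_sub_log_one_add.existsUnique_Ioi_eq continuousOn_sub_log_one_add
    tendsto_sub_log_one_add_atTop (by simpa using hc)

theorem existsUnique_pos_eq_mul_log_one_add_div_add {p c : ℝ} (hp : 0 < p) (hc : 0 < c) :
    ∃! y : ℝ, 0 < y ∧ y = p * log (1 + y / p) + c := by
  refine ((Equiv.mulLeft₀ p hp.ne').existsUnique_congr fun x => ?_).mp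
    (existsUnique_pos_sub_log_one_add_eq (div_pos hc hp))
  simp only [Equiv.mulLeft₀_apply, mul_div_cancel_left₀ _ hp.ne', mul_pos_iff_of_pos_left hp]
  refine and_congr_right fun _ => ?_
  rw [eq_div_iff hp.ne']
  constructor <;> intro h <;> linear_combination h

theorem exp_neg_mul_rpow_eq_iff {p x y c : ℝ} (hx : 0 < x) (hc : 0 < c) :
    exp (-y) * x ^ p = c ↔ y = p * log x - log c := by
  rw [rpow_def_of_pos hx, ← exp_add, ← exp_log hc, exp_eq_exp, log_exp]
  constructor <;> intro h <;> linarith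

end Real

/-- For every `p > 0` the equation `y = p log(1 + y/p) + log 2` has a unique positive
solution; equivalently, `e^{-y} (1 + y/p)^p = 1/2` has a unique positive solution. -/
theorem stmt13 (p : ℝ) (hp : 0 < p) :
    (∃! y : ℝ, 0 < y ∧ y = p * Real.log (1 + y/p) + Real.log 2) ∧
    (∃! y : ℝ, 0 < y ∧ Real.exp (-y) * (1 + y/p) ^ p = 1/2) := by
  have hsol := existsUnique_pos_eq_mul_log_one_add_div_add hp (log_pos one_lt_two)
  refine ⟨hsol, (existsUnique_congr fun y => and_congr_right fun hy => ?_).mpr hsol⟩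
  rw [exp_neg_mul_rpow_eq_iff (by positivity) one_half_pos, one_div, log_inv, sub_neg_eq_add]
end

section
/- Let α₁ > 0, α₂ > 0, R > 0 and set a = (α₁+α₂)/(2R), d(Δ) = a + Δ, χ(Δ) = d(Δ)² − 2α₂Δ/R, A(Δ) = (a(d(Δ)−√χ(Δ))/2 − α₂Δ/(2R))/(−√χ(Δ)). Then, as Δ → 0: (i) √χ(Δ) = (α₁+α₂)/(2R) + ((α₁−α₂)/(α₁+α₂))·Δ + O(Δ²); (ii) d(Δ) + √χ(Δ) = (α₁+α₂)/R + (2α₁/(α₁+α₂))·Δ + O(Δ²); (iii) d(Δ) − √χ(Δ) = (2α₂/(α₁+α₂))·Δ + O(Δ²); (iv) A(Δ) = O(Δ²). -/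
open Real Filter Asymptotics

theorem aux14 (α₁ α₂ R : ℝ) (hα₁ : 0 < α₁) (hα₂ : 0 < α₂) (hR : 0 < R) :
    ((fun Δ : ℝ => Real.sqrt (((α₁ + α₂)/(2*R) + Δ)^2 - 2*α₂*Δ/R)
        - ((α₁+α₂)/(2*R) + ((α₁-α₂)/(α₁+α₂))*Δ)) =O[nhds 0] fun Δ : ℝ => Δ^2) ∧
    ((fun Δ : ℝ => ((α₁ + α₂)/(2*R) + Δ) + Real.sqrt (((α₁ + α₂)/(2*R) + Δ)^2 - 2*α₂*Δ/R)
        - ((α₁+α₂)/R + (2*α₁/(α₁+α₂))*Δ)) =O[nhds 0] fun Δ : ℝ => Δ^2) ∧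
    ((fun Δ : ℝ => ((α₁ + α₂)/(2*R) + Δ) - Real.sqrt (((α₁ + α₂)/(2*R) + Δ)^2 - 2*α₂*Δ/R)
        - (2*α₂/(α₁+α₂))*Δ) =O[nhds 0] fun Δ : ℝ => Δ^2) ∧
    ((fun Δ : ℝ => ((α₁ + α₂)/(2*R)*(((α₁ + α₂)/(2*R) + Δ)
        - Real.sqrt (((α₁ + α₂)/(2*R) + Δ)^2 - 2*α₂*Δ/R))/2 - α₂*Δ/(2*R))
        / (-Real.sqrt (((α₁ + α₂)/(2*R) + Δ)^2 - 2*α₂*Δ/R))) =O[nhds 0] fun Δ : ℝ => Δ^2) := by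
  have hsum : (0:ℝ) < α₁ + α₂ := by positivity
  have hRne : R ≠ 0 := hR.ne'
  have hb : (0:ℝ) < (α₁ + α₂)/(2*R) := by positivity
  set a : ℝ := (α₁ + α₂)/(2*R) with ha_def
  set k : ℝ := (α₁-α₂)/(α₁+α₂) with hk_def
  have hχc : Continuous (fun Δ : ℝ => (a+Δ)^2 - 2*α₂*Δ/R) := by continuity
  have hmc : Continuous (fun Δ : ℝ => a + k*Δ) := by continuity
  have hsc : Continuous (fun Δ : ℝ => Real.sqrt ((a+Δ)^2 - 2*α₂*Δ/R)) :=
    Real.continuous_sqrt.comp hχc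
  have hts : Tendsto (fun Δ : ℝ => Real.sqrt ((a+Δ)^2 - 2*α₂*Δ/R)) (nhds 0) (nhds a) := by
    have := hsc.tendsto 0
    simpa [Real.sqrt_sq hb.le] using this
  have hevχ : ∀ᶠ Δ : ℝ in nhds 0, 0 < (a+Δ)^2 - 2*α₂*Δ/R := by
    have h0 : (0:ℝ) < (a+0)^2 - 2*α₂*0/R := by simpa using pow_pos hb 2
    exact (hχc.tendsto 0).eventually (eventually_gt_nhds h0)
  have hevm : ∀ᶠ Δ : ℝ in nhds 0, 0 < a + k*Δ := by
    have h0 : (0:ℝ) < a + k*0 := by simpa using hb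
    exact (hmc.tendsto 0).eventually (eventually_gt_nhds h0)
  have hkey : (fun Δ : ℝ => Real.sqrt ((a+Δ)^2 - 2*α₂*Δ/R) - (a + k*Δ))
      =ᶠ[nhds 0] fun Δ : ℝ =>
        ((1 - k^2) / (Real.sqrt ((a+Δ)^2 - 2*α₂*Δ/R) + (a + k*Δ))) * Δ^2 := by
    filter_upwards [hevχ, hevm] with Δ h1 h2
    have hsq : Real.sqrt ((a+Δ)^2 - 2*α₂*Δ/R) ^ 2 = (a+Δ)^2 - 2*α₂*Δ/R :=
      Real.sq_sqrt h1.le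
    have hden : Real.sqrt ((a+Δ)^2 - 2*α₂*Δ/R) + (a + k*Δ) ≠ 0 :=
      (add_pos (Real.sqrt_pos.mpr h1) h2).ne'
    have hnum : (a+Δ)^2 - 2*α₂*Δ/R - (a + k*Δ)^2 = (1 - k^2)*Δ^2 := by
      rw [ha_def, hk_def]; field_simp; ring
    rw [div_mul_eq_mul_div (1 - k^2) (Real.sqrt ((a+Δ)^2 - 2*α₂*Δ/R) + (a + k*Δ)) (Δ^2),
      eq_div_iff hden]
    linear_combination hsq + hnum
  have hg : Tendsto (fun Δ : ℝ =>
      (1 - k^2) / (Real.sqrt ((a+Δ)^2 - 2*α₂*Δ/R) + (a + k*Δ))) (nhds 0)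
      (nhds ((1 - k^2) / (a + a))) := by
    have hdenT : Tendsto (fun Δ : ℝ =>
        Real.sqrt ((a+Δ)^2 - 2*α₂*Δ/R) + (a + k*Δ)) (nhds 0) (nhds (a + a)) := by
      have hm : Tendsto (fun Δ : ℝ => a + k*Δ) (nhds 0) (nhds a) := by
        simpa using hmc.tendsto 0
      exact hts.add hm
    exact tendsto_const_nhds.div hdenT (by positivity)
  have h1 : (fun Δ : ℝ => Real.sqrt ((a+Δ)^2 - 2*α₂*Δ/R) - (a + k*Δ))
      =O[nhds 0] fun Δ : ℝ => Δ^2 := by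
    have := ((hg.isBigO_one ℝ).mul (isBigO_refl (fun Δ : ℝ => Δ^2) (nhds 0)))
    exact this.congr' hkey.symm (by filter_upwards with x; ring)
  refine ⟨h1, ?_, ?_, ?_⟩
  · have heq2 : (fun Δ : ℝ => (a+Δ) + Real.sqrt ((a+Δ)^2 - 2*α₂*Δ/R)
        - ((α₁+α₂)/R + (2*α₁/(α₁+α₂))*Δ))
        = fun Δ : ℝ => Real.sqrt ((a+Δ)^2 - 2*α₂*Δ/R) - (a + k*Δ) := by
      funext Δ; rw [ha_def, hk_def]; field_simp; ring
    rw [heq2]; exact h1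
  · have heq3 : (fun Δ : ℝ => (a+Δ) - Real.sqrt ((a+Δ)^2 - 2*α₂*Δ/R)
        - (2*α₂/(α₁+α₂))*Δ)
        = fun Δ : ℝ => -(Real.sqrt ((a+Δ)^2 - 2*α₂*Δ/R) - (a + k*Δ)) := by
      funext Δ; rw [ha_def, hk_def]; field_simp; ring
    rw [heq3]; exact h1.neg_left
  · have h3 : (fun Δ : ℝ => (a+Δ) - Real.sqrt ((a+Δ)^2 - 2*α₂*Δ/R)
        - (2*α₂/(α₁+α₂))*Δ) =O[nhds 0] fun Δ : ℝ => Δ^2 := by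
      have heq3 : (fun Δ : ℝ => (a+Δ) - Real.sqrt ((a+Δ)^2 - 2*α₂*Δ/R)
          - (2*α₂/(α₁+α₂))*Δ)
          = fun Δ : ℝ => -(Real.sqrt ((a+Δ)^2 - 2*α₂*Δ/R) - (a + k*Δ)) := by
        funext Δ; rw [ha_def, hk_def]; field_simp; ring
      rw [heq3]; exact h1.neg_left
    have hN : (fun Δ : ℝ => a*(((a+Δ) - Real.sqrt ((a+Δ)^2 - 2*α₂*Δ/R)))/2 - α₂*Δ/(2*R))
        =O[nhds 0] fun Δ : ℝ => Δ^2 := by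
      have := h3.const_mul_left (a/2)
      refine this.congr' ?_ EventuallyEq.rfl
      filter_upwards with Δ
      rw [ha_def]; field_simp
    have hinv : Tendsto (fun Δ : ℝ => (-Real.sqrt ((a+Δ)^2 - 2*α₂*Δ/R))⁻¹)
        (nhds 0) (nhds (-a)⁻¹) := (hts.neg).inv₀ (neg_ne_zero.mpr hb.ne')
    have := hN.mul (hinv.isBigO_one ℝ)
    refine (this.congr' ?_ (by filter_upwards with x; ring))
    filter_upwards with Δ
    exact (div_eq_mul_inv _ _).symm

/-- Lemma 6.8: asymptotic expansions as `Δ → 0` of `√χ(Δ)`, `d(Δ) ± √χ(Δ)` and `A(Δ)`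
for the advanced NOR gate model, where `a = (α₁+α₂)/(2R)`, `d(Δ) = a + Δ`,
`χ(Δ) = d(Δ)² - 2α₂Δ/R` and `A(Δ) = (a(d(Δ)-√χ(Δ))/2 - α₂Δ/(2R))/(-√χ(Δ))`. -/
theorem stmt14 (α₁ α₂ R : ℝ) (hα₁ : 0 < α₁) (hα₂ : 0 < α₂) (hR : 0 < R) :
    let a := (α₁ + α₂)/(2*R)
    let d : ℝ → ℝ := fun Δ => a + Δ
    let χ : ℝ → ℝ := fun Δ => (d Δ)^2 - 2*α₂*Δ/R
    let A : ℝ → ℝ := fun Δ =>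
      (a*(d Δ - Real.sqrt (χ Δ))/2 - α₂*Δ/(2*R))/(-Real.sqrt (χ Δ))
    ((fun Δ => Real.sqrt (χ Δ) - ((α₁+α₂)/(2*R) + ((α₁-α₂)/(α₁+α₂))*Δ))
      =O[nhds 0] fun Δ => Δ^2) ∧
    ((fun Δ => d Δ + Real.sqrt (χ Δ) - ((α₁+α₂)/R + (2*α₁/(α₁+α₂))*Δ))
      =O[nhds 0] fun Δ => Δ^2) ∧
    ((fun Δ => d Δ - Real.sqrt (χ Δ) - (2*α₂/(α₁+α₂))*Δ)
      =O[nhds 0] fun Δ => Δ^2) ∧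
    ((fun Δ => A Δ) =O[nhds 0] fun Δ => Δ^2) := by
  exact aux14 α₁ α₂ R hα₁ hα₂ hR
end
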